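/- arXiv:2007.03039 — 2 statements merged into one kernel-verified Lean document; each statement's English description precedes it below -/
import Mathlib

section
/- Let V be a finite type and let (u_1,v_1,Δ_1),…,(u_L,v_L,Δ_L) be a list of updates with u_j ≠ v_j and Δ_j ∈ ℤ for each j. Define symmetric zero-diagonal matrices A_0 ≡ 0 and, for j ≥ 1, let A_j agree with A_{j−1} except that A_j(u_j,v_j) = A_j(v_j,u_j) = A_{j−1}(u_j,v_j) + Δ_j. Then the triangle count of the final matrix satisfies T(A_L) = Σ_{j=1}^{L} Δ_j · Σ_{z ∈ V} A_{j−1}(u_j, z) · A_{j−1}(v_j, z). -/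
/-- The triangle count of a symmetric matrix `B` on a finite vertex type `V`:
the sum over all unordered triples `{x,y,z}` of pairwise distinct vertices of
`B x y * B y z * B x z`, expressed as the sum over all 3-element subsets `s` of `V`
of the product of `B` over the three unordered pairs of distinct vertices in `s`. -/
def triCount {V : Type*} [Fintype V] [DecidableEq V]
    (B : V → V → ℤ) (hB : ∀ x y, B x y = B y x) : ℤ :=
  ∑ s ∈ (Finset.univ : Finset V).powersetCard 3,
    ∏ e ∈ s.sym2.filter (fun e => ¬ e.IsDiag), Sym2.lift ⟨B, hB⟩ e

/-- Apply a single turnstile update: add `Δ` to the multiplicity of the edge `{u,v}`. -/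
def applyUpdate {V : Type*} [DecidableEq V]
    (A : V → V → ℤ) (u v : V) (Δ : ℤ) : V → V → ℤ :=
  fun x y => if (x = u ∧ y = v) ∨ (x = v ∧ y = u) then A x y + Δ else A x y

/-- The multiplicity matrix `A_j` obtained after the first `j` updates of a
turnstile edge stream, starting from the all-zero matrix `A_0 ≡ 0`. -/
def matAfter {V : Type*} [DecidableEq V]
    (upds : List (V × V × ℤ)) (j : ℕ) : V → V → ℤ :=
  (upds.take j).foldl (fun A t => applyUpdate A t.1 t.2.1 t.2.2) 0

/-!
Adding `Δ` to the multiplicity of the edge `{u,v}` only changes the weights of the triangles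
`{u,v,z}` through that edge, and each weight `A(u,v) A(u,z) A(v,z)` grows by `Δ A(u,z) A(v,z)`.
So one update raises the triangle count by `Δ ∑_{z ∉ {u,v}} A(u,z) A(v,z)`, where the terms
`z = u, v` may be added back because the diagonal stays zero; summing these increments along
the stream, starting from `T(A_0) = 0`, gives the formula.
-/

namespace Finset

variable {α : Type*} [DecidableEq α]

theorem prod_sym2_filter_not_isDiag_triple {M : Type*} [CommMonoid M] (f : Sym2 α → M)
    {a b c : α} (hab : a ≠ b) (hac : a ≠ c) (hbc : b ≠ c) :
    ∏ e ∈ ({a, b, c} : Finset α).sym2.filter (fun e => ¬ e.IsDiag), f e =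
      f s(a, b) * f s(a, c) * f s(b, c) := by
  have hedges : ({a, b, c} : Finset α).sym2.filter (fun e => ¬ e.IsDiag) =
      {s(a, b), s(a, c), s(b, c)} := by
    ext e
    induction e using Sym2.ind with
    | _ x y =>
      simp only [mem_filter, mk_mem_sym2_iff, mem_insert, mem_singleton,
        Sym2.mk_isDiag_iff, Sym2.eq_iff]
      aesop
  rw [hedges, prod_insert (by simp; tauto),
    prod_insert (by simp; tauto), prod_singleton, mul_assoc]

theorem exists_eq_triple_of_card_eq_three {s : Finset α} (hs : #s = 3) {u v : α}
    (hu : u ∈ s) (hv : v ∈ s) (huv : u ≠ v) : ∃ z ∉ ({u, v} : Finset α), s = {u, v, z} := by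
  have hv' : v ∈ s.erase u := mem_erase.2 ⟨huv.symm, hv⟩
  obtain ⟨z, hz⟩ := card_eq_one.1 <| by
    rw [card_erase_of_mem hv', card_erase_of_mem hu, hs]
  have hzmem : z ∈ (s.erase u).erase v := hz ▸ mem_singleton_self z
  refine ⟨z, ?_, ?_⟩
  · simp only [mem_erase] at hzmem
    simp [hzmem.1, hzmem.2.1]
  · rw [← hz, insert_erase hv', insert_erase hu]

theorem sum_powersetCard_three_filter_mem_mem [Fintype α] {M : Type*} [AddCommMonoid M]
    (g : Finset α → M) {u v : α} (huv : u ≠ v) :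
    ∑ s ∈ (univ.powersetCard 3).filter (fun s => u ∈ s ∧ v ∈ s), g s =
      ∑ z ∈ ({u, v} : Finset α)ᶜ, g {u, v, z} := by
  symm
  refine sum_bij (fun z _ => {u, v, z}) ?_ ?_ ?_ (fun _ _ => rfl)
  · intro z hz
    simp only [mem_compl, mem_insert, mem_singleton, not_or] at hz
    simp only [mem_filter, mem_powersetCard_univ, mem_insert, mem_singleton, true_or, or_true,
      and_true]
    exact card_eq_three.2 ⟨u, v, z, huv, Ne.symm hz.1, Ne.symm hz.2, rfl⟩
  · intro z hz z' _ h
    have : z ∈ ({u, v, z'} : Finset α) := h ▸ by simp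
    simp only [mem_compl, mem_insert, mem_singleton, not_or] at hz this
    tauto
  · intro s hs
    simp only [mem_filter, mem_powersetCard_univ] at hs
    obtain ⟨z, hz, rfl⟩ := exists_eq_triple_of_card_eq_three hs.1 hs.2.1 hs.2.2 huv
    exact ⟨z, mem_compl.2 hz, rfl⟩

end Finset

open Finset

theorem prod_sym2_lift_congr {V R : Type*} [DecidableEq V] [CommMonoid R] {B B' : V → V → R}
    (hB : ∀ x y, B x y = B y x) (hB' : ∀ x y, B' x y = B' y x) {s : Finset V}
    (h : ∀ x ∈ s, ∀ y ∈ s, B x y = B' x y) :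
    ∏ e ∈ s.sym2.filter (fun e => ¬ e.IsDiag), Sym2.lift ⟨B, hB⟩ e =
      ∏ e ∈ s.sym2.filter (fun e => ¬ e.IsDiag), Sym2.lift ⟨B', hB'⟩ e := by
  refine prod_congr rfl fun e he => ?_
  induction e using Sym2.ind with
  | _ x y =>
    rw [mem_filter, mk_mem_sym2_iff] at he
    exact h x he.1.1 y he.1.2

theorem applyUpdate_apply_left_right {V : Type*} [DecidableEq V] (A : V → V → ℤ) (u v : V)
    (Δ : ℤ) :
    applyUpdate A u v Δ u v = A u v + Δ := by
  simp [applyUpdate]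

theorem applyUpdate_apply_of_not_edge {V : Type*} [DecidableEq V] (A : V → V → ℤ) {u v x y : V}
    (Δ : ℤ) (h : ¬((x = u ∧ y = v) ∨ (x = v ∧ y = u))) : applyUpdate A u v Δ x y = A x y :=
  if_neg h

section triCount

variable {V : Type*} [Fintype V] [DecidableEq V]

theorem triCount_congr {B B' : V → V → ℤ} (h : B = B') (hB : ∀ x y, B x y = B y x)
    (hB' : ∀ x y, B' x y = B' y x) : triCount B hB = triCount B' hB' := by
  subst h; rfl

theorem triCount_zero : triCount (0 : V → V → ℤ) (fun _ _ => rfl) = 0 := by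
  refine sum_eq_zero fun s hs => ?_
  obtain ⟨a, ha, b, hb, hab⟩ := one_lt_card.1 (by rw [(mem_powersetCard_univ.1 hs)]; omega)
  exact prod_eq_zero (i := s(a, b)) (by simp [ha, hb, hab]) rfl

theorem sum_prod_sym2_lift_filter_mem_mem {R : Type*} [CommSemiring R] (B : V → V → R)
    (hB : ∀ x y, B x y = B y x) {u v : V} (huv : u ≠ v) :
    ∑ s ∈ (univ.powersetCard 3).filter (fun s => u ∈ s ∧ v ∈ s),
        ∏ e ∈ s.sym2.filter (fun e => ¬ e.IsDiag), Sym2.lift ⟨B, hB⟩ e =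
      B u v * ∑ z ∈ ({u, v} : Finset V)ᶜ, B u z * B v z := by
  rw [sum_powersetCard_three_filter_mem_mem _ huv, mul_sum]
  refine sum_congr rfl fun z hz => ?_
  simp only [mem_compl, mem_insert, mem_singleton, not_or] at hz
  rw [prod_sym2_filter_not_isDiag_triple _ huv (Ne.symm hz.1) (Ne.symm hz.2)]
  simp only [Sym2.lift_mk, mul_assoc]

theorem triCount_applyUpdate (A : V → V → ℤ) (hA : ∀ x y, A x y = A y x) {u v : V}
    (huv : u ≠ v) (Δ : ℤ) (hA' : ∀ x y, applyUpdate A u v Δ x y = applyUpdate A u v Δ y x) :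
    triCount (applyUpdate A u v Δ) hA' =
      triCount A hA + Δ * ∑ z ∈ ({u, v} : Finset V)ᶜ, A u z * A v z := by
  have hsplit : ∀ (B : V → V → ℤ) (hB : ∀ x y, B x y = B y x), triCount B hB =
      ∑ s ∈ (univ.powersetCard 3).filter (fun s => u ∈ s ∧ v ∈ s),
          ∏ e ∈ s.sym2.filter (fun e => ¬ e.IsDiag), Sym2.lift ⟨B, hB⟩ e +
        ∑ s ∈ (univ.powersetCard 3).filter (fun s => ¬(u ∈ s ∧ v ∈ s)),
          ∏ e ∈ s.sym2.filter (fun e => ¬ e.IsDiag), Sym2.lift ⟨B, hB⟩ e :=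
    fun B hB => (sum_filter_add_sum_filter_not _ _ _).symm
  have hfar : ∀ s ∈ (univ.powersetCard 3).filter (fun s : Finset V => ¬(u ∈ s ∧ v ∈ s)),
      ∏ e ∈ s.sym2.filter (fun e => ¬ e.IsDiag), Sym2.lift ⟨applyUpdate A u v Δ, hA'⟩ e =
        ∏ e ∈ s.sym2.filter (fun e => ¬ e.IsDiag), Sym2.lift ⟨A, hA⟩ e := by
    intro s hs
    refine prod_sym2_lift_congr _ _ fun x hx y hy => applyUpdate_apply_of_not_edge A Δ ?_
    rintro (⟨rfl, rfl⟩ | ⟨rfl, rfl⟩) <;> simp_all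
  have hnear : ∀ z ∈ ({u, v} : Finset V)ᶜ,
      applyUpdate A u v Δ u z * applyUpdate A u v Δ v z = A u z * A v z := by
    intro z hz
    simp only [mem_compl, mem_insert, mem_singleton, not_or] at hz
    rw [applyUpdate_apply_of_not_edge A Δ (by tauto),
      applyUpdate_apply_of_not_edge A Δ (by tauto)]
  rw [hsplit, hsplit A, sum_congr rfl hfar, sum_prod_sym2_lift_filter_mem_mem _ _ huv,
    sum_prod_sym2_lift_filter_mem_mem _ _ huv, sum_congr rfl hnear,
    applyUpdate_apply_left_right]
  ring

theorem sum_compl_pair_mul_eq_sum (A : V → V → ℤ) (hdiag : ∀ x, A x x = 0) (u v : V) :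
    ∑ z ∈ ({u, v} : Finset V)ᶜ, A u z * A v z = ∑ z, A u z * A v z := by
  refine sum_subset (subset_univ _) fun z _ hz => ?_
  simp only [mem_compl, not_not, mem_insert, mem_singleton] at hz
  rcases hz with rfl | rfl <;> simp [hdiag]

end triCount

section matAfter

variable {V : Type*} [DecidableEq V]

theorem matAfter_zero (upds : List (V × V × ℤ)) : matAfter upds 0 = 0 := rfl

theorem matAfter_succ (upds : List (V × V × ℤ)) {j : ℕ} (h : j < upds.length) :
    matAfter upds (j + 1) = applyUpdate (matAfter upds j)
      (upds.get ⟨j, h⟩).1 (upds.get ⟨j, h⟩).2.1 (upds.get ⟨j, h⟩).2.2 := by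
  simp only [matAfter, List.take_add_one, List.getElem?_eq_getElem h, Option.toList_some,
    List.foldl_append, List.foldl_cons, List.foldl_nil, List.get_eq_getElem]

theorem matAfter_succ_of_length_le (upds : List (V × V × ℤ)) {j : ℕ} (h : upds.length ≤ j) :
    matAfter upds (j + 1) = matAfter upds j := by
  rw [matAfter, matAfter, List.take_of_length_le h, List.take_of_length_le (by omega)]

theorem matAfter_apply_self (upds : List (V × V × ℤ)) (hne : ∀ t ∈ upds, t.1 ≠ t.2.1)
    (j : ℕ) (x : V) : matAfter upds j x x = 0 := by
  induction j with
  | zero => rfl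
  | succ n ih =>
    rcases lt_or_ge n upds.length with h | h
    · have hne' := hne _ (upds.get_mem ⟨n, h⟩)
      rw [matAfter_succ upds h, applyUpdate_apply_of_not_edge _ _ (by grind), ih]
    · rw [matAfter_succ_of_length_le upds h, ih]

theorem triCount_matAfter [Fintype V] (upds : List (V × V × ℤ))
    (hne : ∀ t ∈ upds, t.1 ≠ t.2.1)
    (hsym : ∀ j : ℕ, ∀ x y, matAfter upds j x y = matAfter upds j y x)
    {n : ℕ} (hn : n ≤ upds.length) :
    triCount (matAfter upds n) (hsym n) =
      ∑ j : Fin n, (upds.get (j.castLE hn)).2.2 *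
        ∑ z : V, matAfter upds j (upds.get (j.castLE hn)).1 z *
          matAfter upds j (upds.get (j.castLE hn)).2.1 z := by
  induction n with
  | zero => exact (triCount_congr (matAfter_zero upds) _ _).trans triCount_zero
  | succ n ih =>
    have hlt : n < upds.length := hn
    rw [triCount_congr (matAfter_succ upds hlt) _ (matAfter_succ upds hlt ▸ hsym _),
      triCount_applyUpdate _ (hsym n) (hne _ (upds.get_mem _)),
      sum_compl_pair_mul_eq_sum _ (matAfter_apply_self upds hne n), ih hlt.le,
      Fin.sum_univ_castSucc]
    rfl

end matAfter

theorem triangle_count_stream {V : Type*} [Fintype V] [DecidableEq V]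
    (upds : List (V × V × ℤ))
    (hne : ∀ t ∈ upds, t.1 ≠ t.2.1)
    (hsym : ∀ j : ℕ, ∀ x y, matAfter upds j x y = matAfter upds j y x) :
    triCount (matAfter upds upds.length) (hsym upds.length) =
      ∑ j : Fin upds.length,
        (upds.get j).2.2 *
          ∑ z : V, matAfter upds j.val (upds.get j).1 z *
            matAfter upds j.val (upds.get j).2.1 z := by
  simpa only [Fin.castLE_refl] using triCount_matAfter upds hne hsym le_rfl
end

section
/- Let G be a simple graph on a finite linearly ordered vertex type V. Then Σ_{v ∈ V} |{ unordered pairs {a,b} : a and b are both adjacent to v, {a,b} is an edge of G, and (a < v or b < v) }| = 2 · T, where T is the number of triangles of G. -/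
theorem adjacency_list_triangle_count {V : Type*} [Fintype V] [LinearOrder V]
    (G : SimpleGraph V) [DecidableRel G.Adj] :
    ∑ v : V,
        Set.ncard {e ∈ G.edgeSet | (∀ x ∈ e, G.Adj v x) ∧ ∃ x ∈ e, x < v} =
      2 * (G.cliqueFinset 3).card := by
  classical
  -- Step A: rewrite each ncard as a Finset card
  have hA : ∀ v : V,
      Set.ncard {e ∈ G.edgeSet | (∀ x ∈ e, G.Adj v x) ∧ ∃ x ∈ e, x < v} =
      (G.edgeFinset.filter (fun e => (∀ x ∈ e, G.Adj v x) ∧ ∃ x ∈ e, x < v)).card := by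
    intro v
    rw [← Set.ncard_coe_finset]
    congr 1
    ext e
    simp [SimpleGraph.mem_edgeFinset]
  simp only [hA]
  -- Step B: each filtered edge set is in bijection with triangles containing v
  -- with v not minimal
  have hB : ∀ v : V,
      (G.edgeFinset.filter (fun e => (∀ x ∈ e, G.Adj v x) ∧ ∃ x ∈ e, x < v)).card =
      ((G.cliqueFinset 3).filter (fun t => v ∈ t ∧ ∃ x ∈ t, x < v)).card := by
    intro v
    apply Finset.card_bij (fun e _ => insert v (Finset.univ.filter (· ∈ e)))
    · intro e he
      simp only [Finset.mem_filter, SimpleGraph.mem_edgeFinset] at he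
      obtain ⟨heE, hadj, x, hx, hxv⟩ := he
      induction e with
      | h a b =>
        have hab : G.Adj a b := heE
        have hva : G.Adj v a := hadj a (by simp)
        have hvb : G.Adj v b := hadj b (by simp)
        have hset : (Finset.univ.filter (· ∈ s(a, b))) = {a, b} := by
          ext y; simp [Sym2.mem_iff]
        rw [hset]
        simp only [Finset.mem_filter]
        constructor
        · rw [SimpleGraph.mem_cliqueFinset_iff, SimpleGraph.is3Clique_iff]
          exact ⟨v, a, b, hva, hvb, hab, rfl⟩
        · refine ⟨by simp, ?_⟩
          rcases (Sym2.mem_iff.mp hx) with rfl | rfl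
          · exact ⟨x, by simp, hxv⟩
          · exact ⟨x, by simp, hxv⟩
    · intro e₁ h₁ e₂ h₂ heq
      simp only [Finset.mem_filter, SimpleGraph.mem_edgeFinset] at h₁ h₂
      have hv1 : v ∉ e₁ := fun hv => G.irrefl (h₁.2.1 v hv)
      have hv2 : v ∉ e₂ := fun hv => G.irrefl (h₂.2.1 v hv)
      have : ∀ y : V, y ∈ e₁ ↔ y ∈ e₂ := by
        intro y
        have := Finset.ext_iff.mp heq y
        simp only [Finset.mem_insert, Finset.mem_filter, Finset.mem_univ, true_and] at this
        constructor
        · intro hy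
          rcases this.mp (Or.inr hy) with rfl | h
          · exact absurd hy hv1
          · exact h
        · intro hy
          rcases this.mpr (Or.inr hy) with rfl | h
          · exact absurd hy hv2
          · exact h
      exact Sym2.ext this
    · intro t ht
      simp only [Finset.mem_filter, SimpleGraph.mem_cliqueFinset_iff] at ht
      obtain ⟨hcl, hvt, x, hxt, hxv⟩ := ht
      rw [SimpleGraph.is3Clique_iff] at hcl
      obtain ⟨a, b, c, hab, hac, hbc, rfl⟩ := hcl
      -- v is one of a, b, c; the edge is the other two
      have hmem : v = a ∨ v = b ∨ v = c := by simpa using hvt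
      have key : ∀ p q : V, G.Adj p q → G.Adj v p → G.Adj v q →
          ({v, p, q} : Finset V) = {a, b, c} →
          (∃ x₀ ∈ ({a, b, c} : Finset V), x₀ < v) →
          ∃ e, ∃ _ : e ∈ G.edgeFinset.filter
            (fun e => (∀ x ∈ e, G.Adj v x) ∧ ∃ x ∈ e, x < v),
            insert v (Finset.univ.filter (· ∈ e)) = {a, b, c} := by
        intro p q hpq hvp hvq hteq hlt
        obtain ⟨x₀, hx₀', hx₀v⟩ := hlt
        rw [← hteq] at hx₀'
        have hlt : ∃ x₀ ∈ ({v, p, q} : Finset V), x₀ < v := ⟨x₀, hx₀', hx₀v⟩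
        clear hx₀' hx₀v
        refine ⟨s(p, q), ?_, ?_⟩
        · simp only [Finset.mem_filter, SimpleGraph.mem_edgeFinset,
            SimpleGraph.mem_edgeSet]
          refine ⟨hpq, ?_, ?_⟩
          · intro x hx
            rcases Sym2.mem_iff.mp hx with rfl | rfl
            · exact hvp
            · exact hvq
          · obtain ⟨x₀, hx₀, hx₀v⟩ := hlt
            simp only [Finset.mem_insert, Finset.mem_singleton] at hx₀
            rcases hx₀ with rfl | rfl | rfl
            · exact absurd hx₀v (lt_irrefl _)
            · exact ⟨x₀, by simp, hx₀v⟩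
            · exact ⟨x₀, by simp, hx₀v⟩
        · rw [← hteq]
          have : (Finset.univ.filter (· ∈ s(p, q))) = {p, q} := by
            ext y; simp [Sym2.mem_iff]
          rw [this]
      rcases hmem with rfl | rfl | rfl
      · exact key b c hbc hab hac (by ext y; simp <;> tauto) ⟨x, hxt, hxv⟩
      · exact key a c hac hab.symm hbc (by ext y; simp <;> tauto) ⟨x, hxt, hxv⟩
      · exact key a b hab hac.symm hbc.symm (by ext y; simp <;> tauto) ⟨x, hxt, hxv⟩
  simp only [hB]
  -- Step C: swap sums
  have hC : ∑ v : V, ((G.cliqueFinset 3).filter (fun t => v ∈ t ∧ ∃ x ∈ t, x < v)).card =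
      ∑ t ∈ G.cliqueFinset 3, (t.filter (fun v => ∃ x ∈ t, x < v)).card := by
    simp only [Finset.card_filter]
    rw [Finset.sum_comm]
    apply Finset.sum_congr rfl
    intro t ht
    rw [← Finset.sum_filter,
      show Finset.univ.filter (fun x => x ∈ t ∧ ∃ y ∈ t, y < x)
          = t.filter (fun x => ∃ y ∈ t, y < x) from by ext; simp,
      Finset.sum_filter]
  rw [hC]
  -- Step D: each triangle contributes 2
  have hD : ∀ t ∈ G.cliqueFinset 3, (t.filter (fun v => ∃ x ∈ t, x < v)).card = 2 := by
    intro t ht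
    rw [SimpleGraph.mem_cliqueFinset_iff] at ht
    have hcard : t.card = 3 := ht.card_eq
    have hne : t.Nonempty := Finset.card_pos.mp (by omega)
    have hfil : t.filter (fun v => ∃ x ∈ t, x < v) = t.erase (t.min' hne) := by
      ext v
      simp only [Finset.mem_filter, Finset.mem_erase]
      constructor
      · rintro ⟨hvt, x, hxt, hxv⟩
        refine ⟨?_, hvt⟩
        rintro rfl
        exact absurd hxv (not_lt.mpr (t.min'_le x hxt))
      · rintro ⟨hvm, hvt⟩
        exact ⟨hvt, t.min' hne, t.min'_mem hne,
          lt_of_le_of_ne (t.min'_le v hvt) (Ne.symm hvm)⟩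
    rw [hfil, Finset.card_erase_of_mem (t.min'_mem hne), hcard]
  rw [Finset.sum_congr rfl hD, Finset.sum_const, smul_eq_mul, mul_comm]
end
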